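/- arXiv:math/9805091 — 9 statements merged into one kernel-verified Lean document; each statement's English description precedes it below -/
import Mathlib

section
/- Let R be a commutative ring, let A_1, …, A_p and B_1, …, B_q be ideals of R, and let a_1, …, a_p ≥ 1 and b_1, …, b_q ≥ 1 be integers. Then ∏_{i=1}^{p} ∏_{j=1}^{q} (A_i + B_j)^{a_i b_j} ⊆ (∏_{i=1}^{p} A_i^{a_i}) + (∏_{j=1}^{q} B_j^{b_j}). (This is the ideal-theoretic content of the lemma asserting that for cycles Z_1, Z_2 on affine spaces, I(Z_1 × Z_2) ⊆ (π_1^* I(Z_1), π_2^* I(Z_2)).) -/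
/-!
Each factor satisfies `(A ⊔ B) ^ (a * b) ≤ A ^ a ⊔ B ^ b`: if `a` or `b` is `0` the right side is `⊤`;
otherwise `a * b ≥ a + b - 1`, and every term of the binomial expansion of
`(A + B) ^ (a + b - 1)` contains `A ^ a` or `B ^ b`.
Modulo a fixed ideal `C`, the ideals `C ⊔ D` multiply like the `D`, so
`∏ j, (C ⊔ D j) ≤ C ⊔ ∏ j, D j`; applying this first over `j` and then over `i` gives the claim.
-/

open Finset

namespace Ideal

variable {R : Type*} [CommSemiring R]

theorem sup_pow_add_add_one_le (I J : Ideal R) (m n : ℕ) :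
    (I ⊔ J) ^ (m + n + 1) ≤ I ^ (m + 1) ⊔ J ^ (n + 1) := by
  rw [← add_eq_sup, ← add_eq_sup, add_pow, sum_eq_sup]
  refine Finset.sup_le fun k _ => ?_
  by_cases hk : m + 1 ≤ k
  · exact mul_le_left.trans (mul_le_left.trans ((pow_le_pow_right hk).trans le_sup_left))
  · exact mul_le_left.trans
      (mul_le_right.trans ((pow_le_pow_right (by omega)).trans le_sup_right))

theorem sup_pow_mul_le (I J : Ideal R) (m n : ℕ) : (I ⊔ J) ^ (m * n) ≤ I ^ m ⊔ J ^ n := by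
  rcases m with _ | m
  · simp [one_eq_top]
  rcases n with _ | n
  · simp [one_eq_top]
  calc (I ⊔ J) ^ ((m + 1) * (n + 1)) ≤ (I ⊔ J) ^ (m + n + 1) := pow_le_pow_right (by nlinarith)
    _ ≤ I ^ (m + 1) ⊔ J ^ (n + 1) := sup_pow_add_add_one_le I J m n

theorem sup_mul_sup_le (C D E : Ideal R) : (C ⊔ D) * (C ⊔ E) ≤ C ⊔ D * E := by
  rw [sup_mul, mul_sup D]
  exact sup_le (mul_le_left.trans le_sup_left) (sup_le (mul_le_right.trans le_sup_left) le_sup_right)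

theorem prod_sup_le_sup_prod {ι : Type*} (s : Finset ι) (C : Ideal R) (D : ι → Ideal R) :
    ∏ i ∈ s, (C ⊔ D i) ≤ C ⊔ ∏ i ∈ s, D i := by
  induction s using Finset.cons_induction with
  | empty => simp [one_eq_top]
  | cons i s _ ih =>
    rw [prod_cons, prod_cons]
    exact (Ideal.mul_mono_right ih).trans (sup_mul_sup_le C (D i) _)

end Ideal

theorem prod_sum_pow_le_general {R : Type*} [CommRing R] {p q : ℕ}
    (A : Fin p → Ideal R) (B : Fin q → Ideal R)
    (a : Fin p → ℕ) (b : Fin q → ℕ) :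
    (∏ i : Fin p, ∏ j : Fin q, (A i + B j) ^ (a i * b j)) ≤
      (∏ i : Fin p, A i ^ a i) + ∏ j : Fin q, B j ^ b j := by
  simp only [Ideal.add_eq_sup]
  calc ∏ i, ∏ j, (A i ⊔ B j) ^ (a i * b j)
      ≤ ∏ i, ∏ j, (A i ^ a i ⊔ B j ^ b j) :=
        prod_le_prod' fun i _ => prod_le_prod' fun j _ => Ideal.sup_pow_mul_le _ _ _ _
    _ ≤ ∏ i, (A i ^ a i ⊔ ∏ j, B j ^ b j) :=
        prod_le_prod' fun i _ => Ideal.prod_sup_le_sup_prod _ _ _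
    _ ≤ (∏ i, A i ^ a i) ⊔ ∏ j, B j ^ b j := by
        simp_rw [sup_comm (A _ ^ _), sup_comm (∏ i, A i ^ a i)]
        exact Ideal.prod_sup_le_sup_prod _ _ _

/-- For ideals `A_1, …, A_p`, `B_1, …, B_q` of a commutative ring and integers
`a_i ≥ 1`, `b_j ≥ 1`, one has
`∏_i ∏_j (A_i + B_j)^(a_i b_j) ⊆ (∏_i A_i^(a_i)) + (∏_j B_j^(b_j))`. -/
theorem prod_sum_pow_le {R : Type*} [CommRing R] {p q : ℕ}
    (A : Fin p → Ideal R) (B : Fin q → Ideal R)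
    (a : Fin p → ℕ) (b : Fin q → ℕ) (ha : ∀ i, 1 ≤ a i) (hb : ∀ j, 1 ≤ b j) :
    (∏ i : Fin p, ∏ j : Fin q, (A i + B j) ^ (a i * b j)) ≤
      (∏ i : Fin p, A i ^ a i) + ∏ j : Fin q, B j ^ b j :=
  prod_sum_pow_le_general A B a b
end

section
/- Let R be a commutative ring and I ⊆ R an ideal. Then the set of all elements of R that are integral over I is itself an ideal of R (it contains I, is closed under addition, and is closed under multiplication by arbitrary elements of R). -/
/-- `r` is integral over the ideal `I`: it satisfies an equation
`r^k + c_1 r^(k-1) + ⋯ + c_k = 0` with `c_j ∈ I^j`. -/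
def IsIntegralOverIdeal {R : Type*} [CommRing R] (I : Ideal R) (r : R) : Prop :=
  ∃ k : ℕ, 1 ≤ k ∧ ∃ c : ℕ → R, (∀ j ∈ Finset.Icc 1 k, c j ∈ I ^ j) ∧
    r ^ k + ∑ j ∈ Finset.Icc 1 k, c j * r ^ (k - j) = 0

/-!
Homogenizing with a variable `t`, the equation `r^k + ∑ c_j r^(k-j) = 0` with `c_j ∈ I^j`
becomes `(rt)^k + ∑ (c_j t^j) (rt)^(k-j) = 0`, an integral equation for `rt` over the Rees
algebra `R[It] ⊆ R[t]`; conversely, the `t^k`-coefficient of an integral equation of `rt` over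
`R[It]` is an equation of `r` over `I`. So `r` is integral over `I` iff `rt` is integral over
`R[It]`, and the theorem follows because the elements integral over a subring form a subring,
`r ↦ rt` is `R`-linear, and `rt ∈ R[It]` for `r ∈ I`.
-/

open Polynomial Finset

theorem isIntegral_of_pow_add_sum_eq_zero {A B : Type*} [CommRing A] [Ring B] [Algebra A B]
    {x : B} {k : ℕ} {a : ℕ → B} (ha : ∀ j ∈ Icc 1 k, a j ∈ (algebraMap A B).range)
    (hx : x ^ k + ∑ j ∈ Icc 1 k, a j * x ^ (k - j) = 0) : IsIntegral A x := by
  set P : B[X] := X ^ k + ∑ j ∈ Icc 1 k, C (a j) * X ^ (k - j)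
  have hP_lifts : P ∈ lifts (algebraMap A B) := by
    refine add_mem (X_pow_mem_lifts _ k) (sum_mem fun j hj => mul_mem ?_ (X_pow_mem_lifts _ _))
    obtain ⟨b, hb⟩ := ha j hj
    exact hb ▸ C_mem_lifts _ b
  have hP_monic : P.Monic := by
    refine monic_X_pow_add ((degree_sum_le _ _).trans_lt ?_)
    refine (Finset.sup_lt_iff (WithBot.bot_lt_coe k)).2 fun j hj => ?_
    have : k - j < k := by grind
    exact (degree_C_mul_X_pow_le _ _).trans_lt (WithBot.coe_lt_coe.2 this)
  obtain ⟨q, hq, -, hq_monic⟩ := lifts_and_natDegree_eq_and_monic hP_lifts hP_monic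
  refine ⟨q, hq_monic, ?_⟩
  rw [eval₂_eq_eval_map, hq]
  simpa [P, eval_finsetSum, eval_X_pow] using hx

theorem isIntegral_reesAlgebra_of_isIntegralOverIdeal {R : Type*} [CommRing R] {I : Ideal R}
    {r : R} (h : IsIntegralOverIdeal I r) : IsIntegral (reesAlgebra I) (monomial 1 r) := by
  obtain ⟨k, -, c, hc, hr⟩ := h
  refine isIntegral_of_pow_add_sum_eq_zero (a := fun j => monomial j (c j))
    (fun j hj => ⟨⟨_, reesAlgebra.monomial_mem.2 (hc j hj)⟩, rfl⟩) ?_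
  calc monomial 1 r ^ k + ∑ j ∈ Icc 1 k, monomial j (c j) * monomial 1 r ^ (k - j)
      = monomial k (r ^ k + ∑ j ∈ Icc 1 k, c j * r ^ (k - j)) := by
        simp only [monomial_pow, one_mul, monomial_mul_monomial, map_add, map_sum]
        congr 1
        refine sum_congr rfl fun j hj => ?_
        rw [Nat.add_sub_cancel' (mem_Icc.1 hj).2]
    _ = 0 := by rw [hr, map_zero]

theorem IsIntegralOverIdeal.of_monic {R : Type*} [CommRing R] {I : Ideal R} {r : R} {p : R[X]}
    (hp : p.Monic) (hpr : aeval r p = 0) (hpI : ∀ i, p.coeff i ∈ I ^ (p.natDegree - i)) :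
    IsIntegralOverIdeal I r := by
  set k := p.natDegree
  rcases Nat.eq_zero_or_pos k with hk | hk
  · have : Subsingleton R := by
      rw [eq_one_of_monic_natDegree_zero hp hk, map_one] at hpr
      exact subsingleton_of_zero_eq_one hpr.symm
    exact ⟨1, le_rfl, 0, by simp, Subsingleton.elim _ _⟩
  refine ⟨k, hk, fun j => p.coeff (k - j), fun j hj => ?_, ?_⟩
  · simpa [Nat.sub_sub_self (mem_Icc.1 hj).2] using hpI (k - j)
  · have hreflect : ∑ j ∈ Icc 1 k, p.coeff (k - j) * r ^ (k - j) =
        ∑ i ∈ range k, p.coeff i * r ^ i := by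
      rw [← Ico_add_one_right_eq_Icc, sum_Ico_reflect (fun i => p.coeff i * r ^ i) 1 le_rfl]
      rw [Nat.sub_self, Nat.add_sub_cancel, range_eq_Ico]
    rw [hreflect, add_comm, ← hpr, aeval_eq_sum_range, sum_range_succ, hp.coeff_natDegree,
      one_smul]
    simp only [smul_eq_mul, k]

theorem IsIntegralOverIdeal.of_isIntegral_reesAlgebra {R : Type*} [CommRing R] {I : Ideal R}
    {r : R} (h : IsIntegral (reesAlgebra I) (monomial 1 r)) : IsIntegralOverIdeal I r := by
  have hA : Algebra.adjoin R { C a * X | a ∈ I } = reesAlgebra I := by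
    rw [← adjoin_monomial_eq_reesAlgebra]
    congr 1
    ext p
    simp [C_mul_X_eq_monomial]
  -- the library lemma below is about the `R[X]`-algebra `S[X]`, whose instance for `S = R` is
  -- not definitionally `Algebra.id`
  have hinst : Polynomial.algebra R R = Algebra.id R[X] :=
    Algebra.algebra_ext _ _ fun p => Polynomial.map_id
  rw [← hA, ← C_mul_X_eq_monomial] at h
  obtain ⟨p, hp, hpr, hpI⟩ :=
    exists_monic_aeval_eq_zero_forall_mem_pow_of_isIntegral (by convert h)
  exact .of_monic hp hpr hpI

theorem isIntegralOverIdeal_iff_isIntegral_reesAlgebra {R : Type*} [CommRing R] {I : Ideal R}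
    {r : R} : IsIntegralOverIdeal I r ↔ IsIntegral (reesAlgebra I) (monomial 1 r) :=
  ⟨isIntegral_reesAlgebra_of_isIntegralOverIdeal, .of_isIntegral_reesAlgebra⟩

/-- The set of elements integral over an ideal `I` is itself an ideal:
it contains `I`, is closed under addition, and is closed under multiplication
by arbitrary ring elements. -/
theorem integralClosureIdeal_isIdeal {R : Type*} [CommRing R] (I : Ideal R) :
    (∀ r ∈ I, IsIntegralOverIdeal I r) ∧
      (∀ r s : R, IsIntegralOverIdeal I r → IsIntegralOverIdeal I s →
        IsIntegralOverIdeal I (r + s)) ∧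
      (∀ a r : R, IsIntegralOverIdeal I r → IsIntegralOverIdeal I (a * r)) := by
  simp only [isIntegralOverIdeal_iff_isIntegral_reesAlgebra]
  refine ⟨fun r hr => ?_, fun r s hr hs => ?_, fun a r hr => ?_⟩
  · have hr' : monomial 1 r ∈ reesAlgebra I := reesAlgebra.monomial_mem.2 (by simpa using hr)
    exact isIntegral_algebraMap (x := (⟨_, hr'⟩ : reesAlgebra I))
  · simpa only [map_add] using hr.add hs
  · have hCa : IsIntegral (reesAlgebra I) (C a) :=
      isIntegral_algebraMap (x := (⟨_, (reesAlgebra I).algebraMap_mem a⟩ : reesAlgebra I))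
    simpa only [C_mul_monomial] using hCa.mul hr
end

section
/- Let R be a commutative ring and I, J ⊆ R ideals. If r ∈ R is integral over I and s ∈ R is integral over J, then r·s is integral over the product ideal I·J. In particular, if r is integral over I then r^m is integral over I^m for every m ≥ 1. -/
/-!
If `r` satisfies an equation of integral dependence of degree `n + 1` over `I`, then
`r (I + (r))^n ⊆ I (I + (r))^n`. After shrinking `I` and `J` to finitely generated ideals that
still contain the coefficients of the equations, `K = (I + (r))^a (J + (s))^b` is a finitely
generated ideal with `rs K ⊆ IJ K`. The Cayley–Hamilton theorem for multiplication by `rs`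
on `K` gives a monic `p` with `i`-th coefficient from the top in `(IJ)^i` and `p(rs) K = 0`; since
`(rs)^(a+b) ∈ K`, the polynomial `X^(a+b) p` is an equation of integral dependence of `rs`
over `IJ`.
-/

open Polynomial

section

variable {R : Type*} [CommRing R]

namespace Ideal

theorem sup_span_singleton_pow_succ_le (I : Ideal R) (r : R) (m : ℕ) :
    (I ⊔ span {r}) ^ (m + 1) ≤ I * (I ⊔ span {r}) ^ m ⊔ span {r ^ (m + 1)} := by
  induction m with
  | zero => simp
  | succ m ih =>
    have hr : span {r ^ (m + 1)} ≤ (I ⊔ span {r}) ^ (m + 1) := by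
      rw [← span_singleton_pow]; exact pow_right_mono le_sup_right _
    calc (I ⊔ span {r}) ^ (m + 1 + 1)
        ≤ (I ⊔ span {r}) * (I * (I ⊔ span {r}) ^ m ⊔ span {r ^ (m + 1)}) := by
          rw [pow_succ']; exact mul_mono_right ih
      _ = I * ((I ⊔ span {r}) ^ (m + 1) ⊔ span {r ^ (m + 1)}) ⊔
            span {r} * span {r ^ (m + 1)} := by
          simp only [← Submodule.add_eq_sup]; ring
      _ = I * ((I ⊔ span {r}) ^ (m + 1) ⊔ span {r ^ (m + 1)}) ⊔ span {r ^ (m + 1 + 1)} := by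
          rw [span_singleton_mul_span_singleton, ← pow_succ']
      _ ≤ I * (I ⊔ span {r}) ^ (m + 1) ⊔ span {r ^ (m + 1 + 1)} := by
          rw [sup_eq_left.mpr hr]

theorem pow_succ_mul_span_singleton_pow_le (I : Ideal R) (r : R) (j m : ℕ) :
    I ^ (j + 1) * span {r} ^ m ≤ I * (I ⊔ span {r}) ^ (j + m) := by
  rw [pow_succ', mul_assoc, pow_add]
  exact mul_mono_right (mul_mono (pow_right_mono le_sup_left j) (pow_right_mono le_sup_right m))

theorem exists_fg_le_and_mem_pow {I : Ideal R} {n : ℕ} {x : R} (hx : x ∈ I ^ n) :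
    ∃ I₀ : Ideal R, I₀.FG ∧ I₀ ≤ I ∧ x ∈ I₀ ^ n := by
  induction n generalizing x with
  | zero => exact ⟨⊥, Submodule.fg_bot, bot_le, by simp⟩
  | succ n ih =>
    rw [pow_succ] at hx
    refine Submodule.mul_induction_on hx (fun y hy a ha => ?_) fun y z hy hz => ?_
    · obtain ⟨I₀, hfg, hle, hy₀⟩ := ih hy
      refine ⟨I₀ ⊔ span {a}, Submodule.FG.sup hfg (Submodule.fg_span_singleton a),
        sup_le hle (span_singleton_le_iff_mem _ |>.mpr ha), ?_⟩
      rw [pow_succ]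
      exact Submodule.mul_mem_mul (pow_right_mono le_sup_left _ hy₀)
        (mem_sup_right (mem_span_singleton_self a))
    · obtain ⟨I₀, hfg₀, hle₀, hy₀⟩ := hy
      obtain ⟨I₁, hfg₁, hle₁, hz₁⟩ := hz
      exact ⟨I₀ ⊔ I₁, Submodule.FG.sup hfg₀ hfg₁, sup_le hle₀ hle₁,
        add_mem (pow_right_mono le_sup_left _ hy₀) (pow_right_mono le_sup_right _ hz₁)⟩

end Ideal

theorem Module.exists_monic_coeff_mem_pow_aeval_smul_eq_zero {M : Type*} [AddCommGroup M]
    [Module R M] [Module.Finite R M] (I : Ideal R) (x : R)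
    (hx : ∀ m : M, x • m ∈ I • (⊤ : Submodule R M)) :
    ∃ p : R[X], p.Monic ∧ (∀ i, p.coeff i ∈ I ^ (p.natDegree - i)) ∧
      ∀ m : M, aeval x p • m = 0 := by
  obtain ⟨p, hmonic, -, hcoeff, hp⟩ :=
    LinearMap.exists_monic_and_natDegree_eq_and_coeff_mem_pow_and_aeval_eq_zero R
      (algebraMap R (Module.End R M) x) I (by rintro _ ⟨m, rfl⟩; exact hx m)
  refine ⟨p, hmonic, hcoeff, fun m => ?_⟩
  rw [aeval_algebraMap_apply, Algebra.algebraMap_eq_smul_one] at hp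
  simpa using LinearMap.congr_fun hp m

namespace IsIntegralOverIdeal

variable {I J : Ideal R} {r s : R}

theorem of_subsingleton [Subsingleton R] : IsIntegralOverIdeal I r :=
  ⟨1, le_rfl, 0, fun _ _ => zero_mem _, Subsingleton.elim _ _⟩

theorem mono (h : IsIntegralOverIdeal I r) (hIJ : I ≤ J) : IsIntegralOverIdeal J r := by
  obtain ⟨k, hk, c, hc, heq⟩ := h
  exact ⟨k, hk, c, fun j hj => Ideal.pow_right_mono hIJ j (hc j hj), heq⟩

theorem exists_fg_le (h : IsIntegralOverIdeal I r) :
    ∃ I₀ : Ideal R, I₀.FG ∧ I₀ ≤ I ∧ IsIntegralOverIdeal I₀ r := by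
  obtain ⟨k, hk, c, hc, heq⟩ := h
  choose! F hFfg hFle hcF using fun j (hj : j ∈ Finset.Icc 1 k) =>
    Ideal.exists_fg_le_and_mem_pow (hc j hj)
  classical
  refine ⟨(Finset.Icc 1 k).sup F, ?_, Finset.sup_le hFle, k, hk, c,
    fun j hj => Ideal.pow_right_mono (Finset.le_sup hj) j (hcF j hj), heq⟩
  exact Finset.sup_induction Submodule.fg_bot (fun _ ha _ hb => Submodule.FG.sup ha hb) hFfg

theorem of_monic_s3 {p : R[X]} (hp : p.Monic) (hcoeff : ∀ i, p.coeff i ∈ I ^ (p.natDegree - i))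
    (hroot : aeval r p = 0) : IsIntegralOverIdeal I r := by
  rcases Nat.eq_zero_or_pos p.natDegree with h0 | hpos
  · rw [eq_one_of_monic_natDegree_zero hp h0, map_one] at hroot
    have : Subsingleton R := subsingleton_of_zero_eq_one hroot.symm
    exact of_subsingleton
  refine ⟨p.natDegree, hpos, fun j => p.coeff (p.natDegree - j), fun j hj => ?_, ?_⟩
  · simpa [Nat.sub_sub_self (Finset.mem_Icc.mp hj).2] using hcoeff (p.natDegree - j)
  · rw [aeval_eq_sum_range, Finset.sum_range_succ, hp.coeff_natDegree, one_smul] at hroot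
    rw [← hroot, add_comm]
    congr 1
    refine Finset.sum_nbij' (p.natDegree - ·) (p.natDegree - ·) ?_ ?_ ?_ ?_
      fun _ _ => (smul_eq_mul ..).symm <;> intro a ha <;>
      simp only [Finset.mem_Icc, Finset.mem_range] at * <;> omega

theorem of_span_singleton_mul_le {K : Ideal R} (hK : K.FG)
    (hKI : Ideal.span {r} * K ≤ I * K) {n : ℕ} (hn : r ^ n ∈ K) :
    IsIntegralOverIdeal I r := by
  cases subsingleton_or_nontrivial R
  · exact of_subsingleton
  have : Module.Finite R K := Module.Finite.iff_fg.mpr hK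
  obtain ⟨p, hp, hcoeff, hpK⟩ :=
    Module.exists_monic_coeff_mem_pow_aeval_smul_eq_zero (M := K) I r fun m => by
      rw [Submodule.mem_smul_top_iff, smul_eq_mul]
      exact hKI (Submodule.mul_mem_mul (Ideal.mem_span_singleton_self r) m.2)
  -- `aeval r p` kills `K ∋ r ^ n`, so `r` is a root of `p * X ^ n`.
  refine of_monic_s3 (p := p * X ^ n) (hp.mul (monic_X_pow n)) (fun i => ?_) ?_
  · rw [coeff_mul_X_pow', hp.natDegree_mul (monic_X_pow n), natDegree_X_pow]
    split_ifs with hi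
    · convert hcoeff (i - n) using 2
      omega
    · exact zero_mem _
  · simpa using congrArg Subtype.val (hpK ⟨r ^ n, hn⟩)

theorem exists_span_singleton_mul_le (h : IsIntegralOverIdeal I r) :
    ∃ n, Ideal.span {r} * (I ⊔ Ideal.span {r}) ^ n ≤ I * (I ⊔ Ideal.span {r}) ^ n := by
  obtain ⟨k, hk, c, hc, heq⟩ := h
  obtain ⟨n, rfl⟩ : ∃ n, k = n + 1 := ⟨k - 1, by omega⟩
  have hrk : r ^ (n + 1) ∈ I * (I ⊔ Ideal.span {r}) ^ n := by
    rw [eq_neg_of_add_eq_zero_left heq]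
    refine neg_mem (sum_mem fun j hj => ?_)
    obtain ⟨hj₁, hjn⟩ := Finset.mem_Icc.mp hj
    obtain ⟨i, rfl⟩ : ∃ i, j = i + 1 := ⟨j - 1, by omega⟩
    have hin : i + (n + 1 - (i + 1)) = n := by omega
    have hmem : c (i + 1) * r ^ (n + 1 - (i + 1)) ∈
        I ^ (i + 1) * Ideal.span {r} ^ (n + 1 - (i + 1)) :=
      Submodule.mul_mem_mul (hc _ hj) (by
        rw [Ideal.span_singleton_pow]; exact Ideal.mem_span_singleton_self _)
    simpa only [hin] using Ideal.pow_succ_mul_span_singleton_pow_le I r i _ hmem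
  refine ⟨n, ?_⟩
  calc Ideal.span {r} * (I ⊔ Ideal.span {r}) ^ n ≤ (I ⊔ Ideal.span {r}) ^ (n + 1) := by
        rw [pow_succ']; exact Ideal.mul_mono_left le_sup_right
    _ ≤ I * (I ⊔ Ideal.span {r}) ^ n ⊔ Ideal.span {r ^ (n + 1)} :=
        Ideal.sup_span_singleton_pow_succ_le I r n
    _ ≤ I * (I ⊔ Ideal.span {r}) ^ n :=
        sup_le le_rfl ((Ideal.span_singleton_le_iff_mem _).mpr hrk)

theorem mul (hr : IsIntegralOverIdeal I r) (hs : IsIntegralOverIdeal J s) :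
    IsIntegralOverIdeal (I * J) (r * s) := by
  obtain ⟨I₀, hI₀, hI₀I, hr₀⟩ := hr.exists_fg_le
  obtain ⟨J₀, hJ₀, hJ₀J, hs₀⟩ := hs.exists_fg_le
  obtain ⟨a, ha⟩ := hr₀.exists_span_singleton_mul_le
  obtain ⟨b, hb⟩ := hs₀.exists_span_singleton_mul_le
  set M := (I₀ ⊔ Ideal.span {r}) ^ a
  set N := (J₀ ⊔ Ideal.span {s}) ^ b
  have hMN : (M * N).FG :=
    ((Submodule.FG.sup hI₀ (Submodule.fg_span_singleton r)).pow a).mul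
      ((Submodule.FG.sup hJ₀ (Submodule.fg_span_singleton s)).pow b)
  have hle : Ideal.span {r * s} * (M * N) ≤ I₀ * J₀ * (M * N) :=
    calc Ideal.span {r * s} * (M * N) = (Ideal.span {r} * M) * (Ideal.span {s} * N) := by
          rw [← Ideal.span_singleton_mul_span_singleton]; ring
      _ ≤ (I₀ * M) * (J₀ * N) := Ideal.mul_mono ha hb
      _ = I₀ * J₀ * (M * N) := by ring
  have hpow : (r * s) ^ (a + b) ∈ M * N := by
    rw [show (r * s) ^ (a + b) = r ^ a * s ^ b * (r ^ b * s ^ a) by ring]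
    exact Ideal.mul_mem_right _ _ (Submodule.mul_mem_mul
      (Ideal.pow_mem_pow (Ideal.mem_sup_right (Ideal.mem_span_singleton_self r)) a)
      (Ideal.pow_mem_pow (Ideal.mem_sup_right (Ideal.mem_span_singleton_self s)) b))
  exact (of_span_singleton_mul_le hMN hle hpow).mono (Ideal.mul_mono hI₀I hJ₀J)

theorem pow (h : IsIntegralOverIdeal I r) {m : ℕ} (hm : 1 ≤ m) :
    IsIntegralOverIdeal (I ^ m) (r ^ m) := by
  induction m, hm using Nat.le_induction with
  | base => simpa using h
  | succ m _ ih => simpa [pow_succ] using ih.mul h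

end IsIntegralOverIdeal

end

/-- If `r` is integral over `I` and `s` is integral over `J`, then `r·s` is
integral over `I·J`.  In particular `r` integral over `I` implies `r^m`
integral over `I^m` for every `m ≥ 1`. -/
theorem isIntegralOverIdeal_mul {R : Type*} [CommRing R] (I J : Ideal R) (r s : R)
    (hr : IsIntegralOverIdeal I r) (hs : IsIntegralOverIdeal J s) :
    IsIntegralOverIdeal (I * J) (r * s) ∧
      ∀ (m : ℕ), 1 ≤ m → ∀ t : R, IsIntegralOverIdeal I t →
        IsIntegralOverIdeal (I ^ m) (t ^ m) :=
  ⟨hr.mul hs, fun _ hm _ ht => ht.pow hm⟩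
end

section
/- Let K be an infinite field, R a commutative K-algebra, e_1, …, e_d ∈ R, and p_1, …, p_d ∈ K[y_1,…,y_m] polynomials; for u ∈ K^m set r_u := Σ_{i=1}^{d} p_i(u)·e_i. Let V ⊆ U ⊆ K^m be subsets with V Zariski dense in U. Then there is an equality of ideals of R: the ideal generated by {r_u : u ∈ V} equals the ideal generated by {r_u : u ∈ U}. -/
open MvPolynomial

/-!
A linear functional `φ` on the `K`-span of the `e_i` turns `u ↦ φ (r_u)` into the polynomial
function `u ↦ eval u (Σ_i φ(e_i) • p_i)`. If `φ` kills every `r_v` with `v ∈ V`, this polynomial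
vanishes on `V`, hence on `U`. So every `r_u` with `u ∈ U` lies in the `K`-linear span of the
`r_v` with `v ∈ V`, and a fortiori in the ideal they generate.
-/

section PolynomialFamily

variable {K M σ ι : Type*} [Field K] [AddCommGroup M] [Module K M] [Fintype ι]

theorem mem_span_of_forall_dual_eq_zero {S : Set M} {x : M}
    (h : ∀ φ : Module.Dual K M, (∀ y ∈ S, φ y = 0) → φ x = 0) :
    x ∈ Submodule.span K S := by
  rw [← Subspace.dualAnnihilator_dualCoannihilator_eq (W := Submodule.span K S),
    Submodule.mem_dualCoannihilator]
  intro φ hφ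
  rw [Submodule.mem_dualAnnihilator] at hφ
  exact h φ fun y hy => hφ y (Submodule.subset_span hy)

theorem dual_apply_sum_eval_smul (φ : Module.Dual K M) (p : ι → MvPolynomial σ K) (e : ι → M)
    (u : σ → K) :
    φ (∑ i, eval u (p i) • e i) = eval u (∑ i, C (φ (e i)) * p i) := by
  simp only [map_sum, map_smul, smul_eq_mul, eval_mul, eval_C, mul_comm]

theorem sum_eval_smul_mem_span_of_dense (p : ι → MvPolynomial σ K) (e : ι → M)
    {U V : Set (σ → K)} (hdense : ∀ f : MvPolynomial σ K,
      (∀ u ∈ V, eval u f = 0) → ∀ u ∈ U, eval u f = 0) {u : σ → K} (hu : u ∈ U) :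
    ∑ i, eval u (p i) • e i ∈
      Submodule.span K ((fun v => ∑ i, eval v (p i) • e i) '' V) := by
  refine mem_span_of_forall_dual_eq_zero fun φ hφ => ?_
  rw [dual_apply_sum_eval_smul]
  refine hdense _ (fun v hv => ?_) u hu
  rw [← dual_apply_sum_eval_smul]
  exact hφ _ ⟨v, hv, rfl⟩

end PolynomialFamily

theorem span_dense_family_eq_general {K : Type*} [Field K] {R : Type*}
    [CommRing R] [Algebra K R] {d m : ℕ} (e : Fin d → R)
    (p : Fin d → MvPolynomial (Fin m) K) (U V : Set (Fin m → K)) (hVU : V ⊆ U)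
    (hdense : ∀ f : MvPolynomial (Fin m) K,
      (∀ u ∈ V, eval u f = 0) → ∀ u ∈ U, eval u f = 0) :
    Ideal.span ((fun u : Fin m → K => ∑ i : Fin d, eval u (p i) • e i) '' V) =
      Ideal.span ((fun u : Fin m → K => ∑ i : Fin d, eval u (p i) • e i) '' U) := by
  refine le_antisymm (Ideal.span_mono (Set.image_mono hVU)) (Ideal.span_le.2 ?_)
  rintro _ ⟨u, hu, rfl⟩
  exact Submodule.span_le_restrictScalars K R _
    (sum_eval_smul_mem_span_of_dense p e hdense hu)

/-- Let `K` be an infinite field and `u ↦ r_u = Σ_i p_i(u)·e_i` a polynomial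
family of elements of a `K`-algebra `R`.  If `V ⊆ U ⊆ K^m` with `V` Zariski
dense in `U`, then the ideal generated by `{r_u : u ∈ V}` equals the ideal
generated by `{r_u : u ∈ U}`. -/
theorem span_dense_family_eq {K : Type*} [Field K] [Infinite K] {R : Type*}
    [CommRing R] [Algebra K R] {d m : ℕ} (e : Fin d → R)
    (p : Fin d → MvPolynomial (Fin m) K) (U V : Set (Fin m → K)) (hVU : V ⊆ U)
    (hdense : ∀ f : MvPolynomial (Fin m) K,
      (∀ u ∈ V, eval u f = 0) → ∀ u ∈ U, eval u f = 0) :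
    Ideal.span ((fun u : Fin m → K => ∑ i : Fin d, eval u (p i) • e i) '' V) =
      Ideal.span ((fun u : Fin m → K => ∑ i : Fin d, eval u (p i) • e i) '' U) :=
  span_dense_family_eq_general e p U V hVU hdense
end

section
/- Let K be an infinite field, R a finitely generated commutative K-algebra, e_1, …, e_d ∈ R, and p_1, …, p_d, q_1, …, q_d ∈ K[y_1,…,y_m] polynomials; for u ∈ K^m set r_u := Σ_{i=1}^{d} p_i(u)·e_i and s_u := Σ_{i=1}^{d} q_i(u)·e_i. Let U ⊆ K^m be a subset whose vanishing ideal in K[y_1,…,y_m] is a prime ideal (i.e., U is irreducible), and let V ⊆ U be Zariski dense in U. Then an element of R is integral over the ideal generated by {r_u·s_u : u ∈ V} if and only if it is integral over the product of the ideal generated by {r_u : u ∈ U} and the ideal generated by {s_u : u ∈ U}; that is, the two ideals have the same integral closure. -/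
open Polynomial

section ValuativeCriterion

variable {A : Type*} [CommRing A]

theorem ValuationSubring.map_mem_of_isIntegral {S F : Type*} [CommRing S] [Algebra A S]
    [Field F] (O : ValuationSubring F) (φ : S →+* F)
    (hA : ∀ a : A, φ (algebraMap A S a) ∈ O) {y : S} (hy : IsIntegral A y) : φ y ∈ O := by
  have : IsIntegral O (φ y) :=
    hy.map_of_comp_eq ((φ.comp (algebraMap A S)).codRestrict O.toSubring hA) φ rfl
  obtain ⟨z, hz⟩ := IsIntegrallyClosed.isIntegral_iff.mp this
  exact hz ▸ z.2

theorem isIntegral_of_forall_mem_valuationSubring {F : Type*} [Field F] [Algebra A F] {x : F}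
    (h : ∀ O : ValuationSubring F, (∀ a : A, algebraMap A F a ∈ O) → x ∈ O) :
    IsIntegral A x := by
  by_contra hx
  obtain ⟨O, hle, hxO⟩ := Subring.exists_le_valuationSubring_of_isIntegrallyClosedIn
    (R := (integralClosure A F).toSubring) hx
  exact hxO (h O fun a => hle (isIntegral_algebraMap (x := a)))

theorem exists_monic_aeval_mem_of_isIntegral_quotient {S : Type*} [CommRing S] [Algebra A S]
    {Q : Ideal S} {y : S} (h : IsIntegral A (Ideal.Quotient.mk Q y)) :
    ∃ g : A[X], g.Monic ∧ aeval y g ∈ Q := by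
  obtain ⟨g, hg, hy⟩ := h
  refine ⟨g, hg, Ideal.Quotient.eq_zero_iff_mem.mp ?_⟩
  rw [← aeval_def] at hy
  rw [← hy]
  exact (aeval_algHom_apply (Ideal.Quotient.mkₐ A Q) y g).symm

theorem isIntegral_of_isIntegral_mk_minimalPrimes {S : Type*} [CommRing S] [Algebra A S]
    [IsNoetherianRing S] {y : S}
    (h : ∀ Q ∈ minimalPrimes S, IsIntegral A (Ideal.Quotient.mk Q y)) : IsIntegral A y := by
  choose g hg hgy using fun Q hQ => exists_monic_aeval_mem_of_isIntegral_quotient (h Q hQ)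
  have hfin := minimalPrimes.finite_of_isNoetherianRing S
  set G : A[X] := ∏ Q : hfin.toFinset, g Q.1 (hfin.mem_toFinset.mp Q.2)
  have hG : G.Monic := monic_prod_of_monic _ _ fun Q _ => hg _ _
  have hGy : IsNilpotent (aeval y G) := by
    rw [← mem_nilradical, nilradical, ← Ideal.sInf_minimalPrimes]
    refine Submodule.mem_sInf.mpr fun Q hQ => ?_
    rw [map_prod]
    exact Ideal.prod_mem _ (Finset.mem_univ ⟨Q, hfin.mem_toFinset.mpr hQ⟩) (hgy Q hQ)
  obtain ⟨n, hn⟩ := hGy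
  exact ⟨G ^ n, hG.pow n, by rw [← aeval_def, map_pow, hn]⟩

universe u in
theorem isIntegral_of_forall_map_mem_valuationSubring {S : Type u} [CommRing S] [Algebra A S]
    [IsNoetherianRing S] {y : S}
    (h : ∀ (F : Type u) [Field F] (φ : S →+* F) (O : ValuationSubring F),
      (∀ a : A, φ (algebraMap A S a) ∈ O) → φ y ∈ O) :
    IsIntegral A y := by
  refine isIntegral_of_isIntegral_mk_minimalPrimes fun Q hQ => ?_
  have : Q.IsPrime := hQ.1.1
  let ι := IsScalarTower.toAlgHom A (S ⧸ Q) (FractionRing (S ⧸ Q))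
  refine (isIntegral_algHom_iff ι (IsFractionRing.injective _ _)).mp ?_
  exact isIntegral_of_forall_mem_valuationSubring fun O hO =>
    h _ (ι.toRingHom.comp (Ideal.Quotient.mk Q)) O fun a => hO a

end ValuativeCriterion

section Rees

variable {R : Type*} [CommRing R]

theorem IsIntegralOverIdeal.mono_s10 {I J : Ideal R} (h : I ≤ J) {t : R}
    (ht : IsIntegralOverIdeal I t) : IsIntegralOverIdeal J t := by
  obtain ⟨k, hk, c, hc, he⟩ := ht
  exact ⟨k, hk, c, fun j hj => Ideal.pow_right_mono h j (hc j hj), he⟩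

theorem C_mul_X_pow_eq_monomial_pow (t : R) (i : ℕ) : (C t * X) ^ i = monomial i (t ^ i) := by
  rw [mul_pow, ← C_pow, C_mul_X_pow_eq_monomial]

theorem coeff_natDegree_eval_C_mul_X (g : R[X][X]) (t : R) :
    (g.eval (C t * X)).coeff g.natDegree =
      ∑ i ∈ Finset.range (g.natDegree + 1), (g.coeff i).coeff (g.natDegree - i) * t ^ i := by
  rw [eval_eq_sum_range, finsetSum_coeff]
  refine Finset.sum_congr rfl fun i hi => ?_
  obtain ⟨d, hd⟩ := Nat.exists_eq_add_of_le (Finset.mem_range_succ_iff.mp hi)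
  rw [C_mul_X_pow_eq_monomial_pow, hd, add_tsub_cancel_left, add_comm, coeff_mul_monomial]

theorem IsIntegralOverIdeal.isIntegral_reesAlgebra {I : Ideal R} {t : R}
    (h : IsIntegralOverIdeal I t) : IsIntegral (reesAlgebra I) (C t * X) := by
  obtain ⟨k, hk, c, hc, heq⟩ := h
  let a : ℕ → reesAlgebra I := fun j =>
    if hj : j ∈ Finset.Icc 1 k then ⟨monomial j (c j), reesAlgebra.monomial_mem.mpr (hc j hj)⟩
    else 0
  refine ⟨X ^ k + ∑ j ∈ Finset.Icc 1 k, C (a j) * X ^ (k - j), monic_X_pow_add ?_, ?_⟩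
  · refine (degree_sum_le _ _).trans_lt ((Finset.sup_lt_iff (WithBot.bot_lt_coe k)).2 ?_)
    intro j hj
    refine (degree_C_mul_X_pow_le _ _).trans_lt ?_
    have := (Finset.mem_Icc.mp hj).1
    exact Nat.cast_lt.mpr (by omega)
  · have hterm : ∀ j ∈ Finset.Icc 1 k,
        algebraMap (reesAlgebra I) R[X] (a j) * (C t * X) ^ (k - j) =
          monomial k (c j * t ^ (k - j)) := by
      intro j hj
      simp only [a, dif_pos hj]
      show monomial j (c j) * (C t * X) ^ (k - j) = _
      rw [C_mul_X_pow_eq_monomial_pow, monomial_mul_monomial,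
        Nat.add_sub_cancel' (Finset.mem_Icc.mp hj).2]
    simp only [eval₂_add, eval₂_finsetSum, eval₂_mul, eval₂_C, eval₂_X_pow]
    rw [Finset.sum_congr rfl hterm, C_mul_X_pow_eq_monomial_pow, ← map_sum, ← map_add, heq,
      map_zero]

theorem sum_Icc_reflect_eq_sum_range {M : Type*} [AddCommMonoid M] (f : ℕ → ℕ → M)
    (n : ℕ) :
    ∑ j ∈ Finset.Icc 1 n, f (n - j) j = ∑ i ∈ Finset.range n, f i (n - i) := by
  refine Finset.sum_nbij' (n - ·) (n - ·) ?_ ?_ ?_ ?_ ?_ <;> intro j hj <;>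
    simp only [Finset.mem_Icc, Finset.mem_range] at hj ⊢
  all_goals first | omega | rw [Nat.sub_sub_self hj.2]

theorem isIntegralOverIdeal_of_isIntegral_reesAlgebra {I : Ideal R} {t : R}
    (h : IsIntegral (reesAlgebra I) (C t * X)) : IsIntegralOverIdeal I t := by
  rcases subsingleton_or_nontrivial R with hR | hR
  · exact ⟨1, le_rfl, 0, fun j _ => zero_mem _, Subsingleton.elim _ _⟩
  obtain ⟨g, hg, hroot⟩ := h
  set G := g.map (algebraMap (reesAlgebra I) R[X])
  have hG : G.Monic := hg.map _
  have hGcoeff (i : ℕ) : G.coeff i ∈ reesAlgebra I := by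
    simp only [G, coeff_map]
    exact (g.coeff i).2
  -- the coefficient of `X ^ deg G` in `G (t X) = 0` is the equation of integrality over `I`
  have hsum := coeff_natDegree_eval_C_mul_X G t
  rw [eval_map, hroot, coeff_zero, Finset.sum_range_succ, Nat.sub_self, hG.coeff_natDegree,
    coeff_one_zero, one_mul] at hsum
  have hn : 1 ≤ G.natDegree := by
    refine Nat.one_le_iff_ne_zero.mpr fun hn0 => ?_
    rw [hn0, Finset.sum_range_zero, pow_zero, zero_add] at hsum
    exact zero_ne_one hsum
  refine ⟨G.natDegree, hn, fun j => (G.coeff (G.natDegree - j)).coeff j,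
    fun j _ => (mem_reesAlgebra_iff _ _).mp (hGcoeff _) j, ?_⟩
  rw [sum_Icc_reflect_eq_sum_range (fun i j => (G.coeff i).coeff j * t ^ i), hsum, add_comm]

theorem monomial_one_mem_reesAlgebra {I : Ideal R} {x : R} (hx : x ∈ I) :
    monomial 1 x ∈ reesAlgebra I :=
  reesAlgebra.monomial_mem.mpr (by rwa [pow_one])

theorem reesAlgebra_span_le {T : Subring R[X]} (hC : ∀ x, C x ∈ T)
    {s : Set R} (hs : ∀ x ∈ s, monomial 1 x ∈ T) {y : R[X]}
    (hy : y ∈ reesAlgebra (Ideal.span s)) : y ∈ T := by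
  rw [← adjoin_monomial_eq_reesAlgebra] at hy
  induction hy using Algebra.adjoin_induction with
  | mem y hy =>
    obtain ⟨x, hx, rfl⟩ := hy
    induction hx using Submodule.span_induction with
    | mem x hx => exact hs x hx
    | zero => rw [map_zero]; exact T.zero_mem
    | add x x' _ _ hx hx' => rw [map_add]; exact T.add_mem hx hx'
    | smul c x _ hx => rw [smul_eq_mul, ← C_mul_monomial]; exact T.mul_mem (hC c) hx
  | algebraMap x => exact hC x
  | add y y' _ _ hy hy' => exact T.add_mem hy hy'
  | mul y y' _ _ hy hy' => exact T.mul_mem hy hy'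

theorem ValuationSubring.map_monomial_one_mem_of_valuation_le {F : Type*} [Field F]
    (O : ValuationSubring F) (φ : R[X] →+* F) {x y : R}
    (hxy : O.valuation (φ (C x)) ≤ O.valuation (φ (C y))) (hy : φ (monomial 1 y) ∈ O) :
    φ (monomial 1 x) ∈ O := by
  rw [← C_mul_X_eq_monomial, map_mul] at hy ⊢
  rw [← O.valuation_le_one_iff, map_mul] at hy ⊢
  exact (mul_le_mul_left hxy _).trans hy

end Rees

open MvPolynomial

theorem Valuation.exists_dual_ne_zero_of_lt {K R Γ₀ : Type*} [Field K] [CommRing R]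
    [Algebra K R] [LinearOrderedCommGroupWithZero Γ₀] (v : Valuation R Γ₀)
    (hK : ∀ c : K, v (algebraMap K R c) ≤ 1) {x : R} (hx : v x ≠ 0) :
    ∃ ℓ : Module.Dual K R, ℓ x ≠ 0 ∧ ∀ y, v y < v x → ℓ y = 0 := by
  let W : Submodule K R :=
    { carrier := {y | v y < v x}
      add_mem' := fun hy hz => (v.map_add _ _).trans_lt (max_lt hy hz)
      zero_mem' := by simpa only [Set.mem_ofPred_eq, map_zero] using zero_lt_iff.mpr hx
      smul_mem' := fun c y (hy : v y < v x) => by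
        show v (c • y) < v x
        rw [Algebra.smul_def, map_mul]
        exact (mul_le_of_le_one_left' (hK c)).trans_lt hy }
  obtain ⟨ℓ, hℓx, hℓW⟩ := Submodule.exists_dual_map_eq_bot_of_notMem (p := W) (x := x)
    (lt_irrefl (v x)) inferInstance
  exact ⟨ℓ, hℓx, fun y hy => LinearMap.le_ker_iff_map.mpr hℓW hy⟩

theorem exists_eval_ne_zero_forall_valuation_le {K R Γ₀ σ ι : Type*} [Field K] [CommRing R]
    [Algebra K R] [LinearOrderedCommGroupWithZero Γ₀] [Fintype ι] (v : Valuation R Γ₀)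
    (hK : ∀ c : K, v (algebraMap K R c) ≤ 1) (p : ι → MvPolynomial σ K) (e : ι → R)
    (u : σ → K) :
    ∃ g : MvPolynomial σ K, eval u g ≠ 0 ∧ ∀ w, eval w g ≠ 0 →
      v (∑ i, eval u (p i) • e i) ≤ v (∑ i, eval w (p i) • e i) := by
  by_cases h0 : v (∑ i, eval u (p i) • e i) = 0
  · exact ⟨1, by simp, fun w _ => h0 ▸ zero_le⟩
  obtain ⟨ℓ, hℓu, hℓ⟩ := v.exists_dual_ne_zero_of_lt hK h0
  have heval (w : σ → K) :
      eval w (∑ i, ℓ (e i) • p i) = ℓ (∑ i, eval w (p i) • e i) := by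
    simp only [map_sum, map_smul, MvPolynomial.smul_eval, smul_eq_mul, mul_comm]
  refine ⟨∑ i, ℓ (e i) • p i, heval u ▸ hℓu, fun w hw => not_lt.mp fun hlt => ?_⟩
  exact hw (heval w ▸ hℓ _ hlt)

theorem exists_mem_eval_ne_zero_of_isPrime_vanishingIdeal {K σ : Type*} [Field K]
    {U V : Set (σ → K)} (hU : (vanishingIdeal K U).IsPrime)
    (hdense : ∀ f : MvPolynomial σ K, (∀ u ∈ V, eval u f = 0) → ∀ u ∈ U, eval u f = 0)
    {g h : MvPolynomial σ K} {u u' : σ → K} (hu : u ∈ U) (hu' : u' ∈ U)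
    (hg : eval u g ≠ 0) (hh : eval u' h ≠ 0) :
    ∃ w ∈ V, eval w g ≠ 0 ∧ eval w h ≠ 0 := by
  have hgh : g * h ∉ vanishingIdeal K U := fun hmem =>
    (hU.mem_or_mem hmem).elim (fun hg' => hg (mem_vanishingIdeal_iff.mp hg' u hu))
      (fun hh' => hh (mem_vanishingIdeal_iff.mp hh' u' hu'))
  by_contra! hV
  refine hgh (mem_vanishingIdeal_iff.mpr (hdense _ fun w hw => ?_))
  rw [map_mul, mul_eq_zero, or_iff_not_imp_left]
  exact hV w hw

theorem exists_mem_valuation_le_of_isPrime_vanishingIdeal {K R Γ₀ σ ι : Type*} [Field K]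
    [CommRing R] [Algebra K R] [LinearOrderedCommGroupWithZero Γ₀] [Fintype ι]
    (v : Valuation R Γ₀) (hK : ∀ c : K, v (algebraMap K R c) ≤ 1)
    (p q : ι → MvPolynomial σ K) (e : ι → R) {U V : Set (σ → K)}
    (hU : (vanishingIdeal K U).IsPrime)
    (hdense : ∀ f : MvPolynomial σ K, (∀ u ∈ V, eval u f = 0) → ∀ u ∈ U, eval u f = 0)
    {u u' : σ → K} (hu : u ∈ U) (hu' : u' ∈ U) :
    ∃ w ∈ V, v (∑ i, eval u (p i) • e i) ≤ v (∑ i, eval w (p i) • e i) ∧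
      v (∑ i, eval u' (q i) • e i) ≤ v (∑ i, eval w (q i) • e i) := by
  obtain ⟨g, hgu, hg⟩ := exists_eval_ne_zero_forall_valuation_le v hK p e u
  obtain ⟨h, hhu, hh⟩ := exists_eval_ne_zero_forall_valuation_le v hK q e u'
  obtain ⟨w, hw, hgw, hhw⟩ :=
    exists_mem_eval_ne_zero_of_isPrime_vanishingIdeal hU hdense hu hu' hgu hhu
  exact ⟨w, hw, hg w hgw, hh w hhw⟩

theorem integralClosure_span_prod_family_general {K : Type*} [Field K]
    {R : Type*} [CommRing R] [Algebra K R] [Algebra.FiniteType K R] {d m : ℕ}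
    (e : Fin d → R) (p q : Fin d → MvPolynomial (Fin m) K)
    (U V : Set (Fin m → K)) (hVU : V ⊆ U)
    (hU : (vanishingIdeal K U).IsPrime)
    (hdense : ∀ f : MvPolynomial (Fin m) K,
      (∀ u ∈ V, eval u f = 0) → ∀ u ∈ U, eval u f = 0)
    (t : R) :
    IsIntegralOverIdeal
        (Ideal.span ((fun u : Fin m → K =>
          (∑ i : Fin d, eval u (p i) • e i) * ∑ i : Fin d, eval u (q i) • e i) '' V)) t ↔
      IsIntegralOverIdeal
        (Ideal.span ((fun u : Fin m → K => ∑ i : Fin d, eval u (p i) • e i) '' U) *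
          Ideal.span ((fun u : Fin m → K => ∑ i : Fin d, eval u (q i) • e i) '' U)) t := by
  constructor
  · refine fun h => h.mono_s10 (Ideal.span_le.mpr ?_)
    rintro _ ⟨w, hw, rfl⟩
    exact Ideal.mul_mem_mul (Ideal.subset_span ⟨w, hVU hw, rfl⟩)
      (Ideal.subset_span ⟨w, hVU hw, rfl⟩)
  · intro h
    have : IsNoetherianRing R := Algebra.FiniteType.isNoetherianRing K R
    rw [Ideal.span_mul_span'] at h
    refine isIntegralOverIdeal_of_isIntegral_reesAlgebra
      (isIntegral_of_forall_map_mem_valuationSubring fun F _ φ O hO => ?_)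
    have hC (x : R) : φ (C x) ∈ O := hO ⟨C x, (reesAlgebra _).algebraMap_mem x⟩
    refine O.map_mem_of_isIntegral φ (fun a => reesAlgebra_span_le (T := O.toSubring.comap φ)
      hC ?_ a.2) h.isIntegral_reesAlgebra
    rintro _ ⟨_, ⟨u, hu, rfl⟩, _, ⟨u', hu', rfl⟩, rfl⟩
    obtain ⟨w, hw, hpw, hqw⟩ := exists_mem_valuation_le_of_isPrime_vanishingIdeal
      (O.valuation.comap (φ.comp C)) (fun c => (O.valuation_le_one_iff _).mpr (hC _))
      p q e hU hdense hu hu'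
    refine O.map_monomial_one_mem_of_valuation_le φ ?_
      (hO ⟨_, monomial_one_mem_reesAlgebra (Ideal.subset_span ⟨w, hw, rfl⟩)⟩)
    simpa only [Valuation.comap_apply, RingHom.comp_apply, map_mul] using mul_le_mul' hpw hqw

/-- Let `K` be an infinite field, `R` a finitely generated `K`-algebra, and
`u ↦ r_u`, `u ↦ s_u` polynomial families of elements of `R`.  If `U ⊆ K^m` is
irreducible (its vanishing ideal is prime) and `V ⊆ U` is Zariski dense in `U`,
then the ideal generated by `{r_u·s_u : u ∈ V}` and the product of the ideals
generated by `{r_u : u ∈ U}` and `{s_u : u ∈ U}` have the same integral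
closure. -/
theorem integralClosure_span_prod_family {K : Type*} [Field K] [Infinite K]
    {R : Type*} [CommRing R] [Algebra K R] [Algebra.FiniteType K R] {d m : ℕ}
    (e : Fin d → R) (p q : Fin d → MvPolynomial (Fin m) K)
    (U V : Set (Fin m → K)) (hVU : V ⊆ U)
    (hU : (vanishingIdeal K U).IsPrime)
    (hdense : ∀ f : MvPolynomial (Fin m) K,
      (∀ u ∈ V, eval u f = 0) → ∀ u ∈ U, eval u f = 0)
    (t : R) :
    IsIntegralOverIdeal
        (Ideal.span ((fun u : Fin m → K =>
          (∑ i : Fin d, eval u (p i) • e i) * ∑ i : Fin d, eval u (q i) • e i) '' V)) t ↔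
      IsIntegralOverIdeal
        (Ideal.span ((fun u : Fin m → K => ∑ i : Fin d, eval u (p i) • e i) '' U) *
          Ideal.span ((fun u : Fin m → K => ∑ i : Fin d, eval u (q i) • e i) '' U)) t :=
  integralClosure_span_prod_family_general e p q U V hVU hU hdense t
end

section
/- Let K be an infinite field and R = K[x,y]. Then the ideal of R generated by the set {(x − u·y)(x + u·y) : u ∈ K} equals the ideal (x², y²), while the product of the ideal generated by {x − u·y : u ∈ K} and the ideal generated by {x + u·y : u ∈ K} equals (x, y)²; moreover these two ideals are different (e.g., x·y lies in (x,y)² but not in (x², y²)). -/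
open MvPolynomial

/-! Taking `u = 0` and `u = 1` already recovers the generators: `x` and `x ∓ y` give `(x, y)` for
each factor, and `x²` and `x² − y²` give `(x², y²)`. The monomial ideal `(x², y²)` misses `xy`
because the monomial `xy` is divisible by neither `x²` nor `y²`. -/

section SpanRange

variable {R A : Type*} [Semiring R] [CommRing A] (φ : R →+* A) (a b : A)

theorem Ideal.span_range_sub_mul_mul_add_mul :
    Ideal.span (Set.range fun u => (a - φ u * b) * (a + φ u * b)) = Ideal.span {a ^ 2, b ^ 2} := by
  set I := Ideal.span (Set.range fun u => (a - φ u * b) * (a + φ u * b))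
  have hmem (u : R) : (a - φ u * b) * (a + φ u * b) ∈ I := Ideal.subset_span ⟨u, rfl⟩
  have ha : a ^ 2 ∈ I := by simpa [sq] using hmem 0
  have hb : b ^ 2 ∈ I := by
    convert I.sub_mem ha (hmem 1) using 1
    simp only [map_one]
    ring
  refine le_antisymm (Ideal.span_le.2 ?_) (Ideal.span_le.2 (Set.pair_subset ha hb))
  rintro _ ⟨u, rfl⟩
  exact Ideal.mem_span_pair.2 ⟨1, -φ u ^ 2, by ring⟩

theorem Ideal.span_range_add_mul :
    Ideal.span (Set.range fun u => a + φ u * b) = Ideal.span {a, b} := by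
  set I := Ideal.span (Set.range fun u => a + φ u * b)
  have hmem (u : R) : a + φ u * b ∈ I := Ideal.subset_span ⟨u, rfl⟩
  have ha : a ∈ I := by simpa using hmem 0
  have hb : b ∈ I := by simpa using I.sub_mem (hmem 1) ha
  refine le_antisymm (Ideal.span_le.2 ?_) (Ideal.span_le.2 (Set.pair_subset ha hb))
  rintro _ ⟨u, rfl⟩
  exact Ideal.mem_span_pair.2 ⟨1, φ u, by ring⟩

theorem Ideal.span_range_sub_mul :
    Ideal.span (Set.range fun u => a - φ u * b) = Ideal.span {a, b} := by
  simpa only [mul_neg, ← sub_eq_add_neg, Ideal.span_pair_neg] using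
    Ideal.span_range_add_mul φ a (-b)

end SpanRange

theorem Ideal.mul_mem_span_pair_sq {A : Type*} [CommSemiring A] (a b : A) :
    a * b ∈ Ideal.span {a, b} ^ 2 :=
  sq (Ideal.span {a, b}) ▸ Ideal.mul_mem_mul (Ideal.subset_span (by simp))
    (Ideal.subset_span (by simp))

theorem MvPolynomial.X_mul_X_notMem_span_X_sq_X_sq {σ R : Type*} [CommSemiring R] [Nontrivial R]
    {i j : σ} (hij : i ≠ j) :
    (X i * X j : MvPolynomial σ R) ∉ Ideal.span {X i ^ 2, X j ^ 2} := by
  classical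
  have hgen : {(X i ^ 2 : MvPolynomial σ R), X j ^ 2} =
      (fun s => monomial s (1 : R)) '' {Finsupp.single i 2, Finsupp.single j 2} := by
    simp [Set.image_pair, X_pow_eq_monomial]
  rw [hgen, mem_ideal_span_monomial_image, X, X, monomial_mul, one_mul,
    support_monomial, if_neg one_ne_zero]
  simp [Finsupp.single_le_iff, hij, hij.symm]

theorem span_products_ne_product_spans_general {K : Type*} [Field K] :
    Ideal.span (Set.range fun u : K =>
        ((X 0 - C u * X 1) * (X 0 + C u * X 1) : MvPolynomial (Fin 2) K)) =
      Ideal.span {(X 0 ^ 2 : MvPolynomial (Fin 2) K), X 1 ^ 2} ∧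
    Ideal.span (Set.range fun u : K => (X 0 - C u * X 1 : MvPolynomial (Fin 2) K)) *
        Ideal.span (Set.range fun u : K => (X 0 + C u * X 1 : MvPolynomial (Fin 2) K)) =
      Ideal.span {(X 0 : MvPolynomial (Fin 2) K), X 1} ^ 2 ∧
    Ideal.span {(X 0 ^ 2 : MvPolynomial (Fin 2) K), X 1 ^ 2} ≠
      Ideal.span {(X 0 : MvPolynomial (Fin 2) K), X 1} ^ 2 ∧
    (X 0 * X 1 : MvPolynomial (Fin 2) K) ∈
      Ideal.span {(X 0 : MvPolynomial (Fin 2) K), X 1} ^ 2 ∧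
    (X 0 * X 1 : MvPolynomial (Fin 2) K) ∉
      Ideal.span {(X 0 ^ 2 : MvPolynomial (Fin 2) K), X 1 ^ 2} := by
  have hmem := Ideal.mul_mem_span_pair_sq (X 0 : MvPolynomial (Fin 2) K) (X 1)
  have hnotMem := X_mul_X_notMem_span_X_sq_X_sq (R := K) (show (0 : Fin 2) ≠ 1 by decide)
  rw [Ideal.span_range_sub_mul_mul_add_mul, Ideal.span_range_sub_mul, Ideal.span_range_add_mul,
    ← sq]
  exact ⟨rfl, rfl, fun h => hnotMem (h ▸ hmem), hmem, hnotMem⟩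

/-- In `K[x,y]` over an infinite field `K`: the ideal generated by
`{(x−uy)(x+uy) : u ∈ K}` is `(x², y²)`, while the product of the ideals
generated by `{x−uy : u ∈ K}` and `{x+uy : u ∈ K}` is `(x,y)²`; these two
ideals are different, since `x·y ∈ (x,y)²` but `x·y ∉ (x², y²)`. -/
theorem span_products_ne_product_spans {K : Type*} [Field K] [Infinite K] :
    Ideal.span (Set.range fun u : K =>
        ((X 0 - C u * X 1) * (X 0 + C u * X 1) : MvPolynomial (Fin 2) K)) =
      Ideal.span {(X 0 ^ 2 : MvPolynomial (Fin 2) K), X 1 ^ 2} ∧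
    Ideal.span (Set.range fun u : K => (X 0 - C u * X 1 : MvPolynomial (Fin 2) K)) *
        Ideal.span (Set.range fun u : K => (X 0 + C u * X 1 : MvPolynomial (Fin 2) K)) =
      Ideal.span {(X 0 : MvPolynomial (Fin 2) K), X 1} ^ 2 ∧
    Ideal.span {(X 0 ^ 2 : MvPolynomial (Fin 2) K), X 1 ^ 2} ≠
      Ideal.span {(X 0 : MvPolynomial (Fin 2) K), X 1} ^ 2 ∧
    (X 0 * X 1 : MvPolynomial (Fin 2) K) ∈
      Ideal.span {(X 0 : MvPolynomial (Fin 2) K), X 1} ^ 2 ∧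
    (X 0 * X 1 : MvPolynomial (Fin 2) K) ∉
      Ideal.span {(X 0 ^ 2 : MvPolynomial (Fin 2) K), X 1 ^ 2} :=
  span_products_ne_product_spans_general
end

section
/- Let K be a field and let I be the ideal of K[x_1, x_2, x_3] generated by x_1³ + x_2⁵, x_1²x_3, x_1x_3², x_3³, x_2⁴x_3, x_2³x_3², x_2²x_3³, x_2x_3⁴, x_3⁵. Then the element x_2²x_3² is integral over I (indeed (x_2²x_3²)² − x_3³·(x_2⁴x_3) = 0 and x_3³·(x_2⁴x_3) ∈ I²), but x_2²x_3² ∉ I. In particular, I is not integrally closed. -/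
/-!
Squaring gives `(x₂²x₃²)² = x₃³ · x₂⁴x₃ ∈ I²`, so `x₂²x₃²` is integral over `I`. On the other
hand every generator of `I` lies in the monomial ideal `(x₁, x₂³, x₃³)`, and a monomial lies in an
ideal generated by powers of variables only if one of those powers divides it, which fails for
`x₂²x₃²`.
-/

open MvPolynomial

theorem isIntegralOverIdeal_of_pow_mem_pow {R : Type*} [CommRing R] {I : Ideal R} {r : R}
    {k : ℕ} (hk : 1 ≤ k) (h : r ^ k ∈ I ^ k) : IsIntegralOverIdeal I r := by
  classical
  refine ⟨k, hk, fun j => if j = k then -r ^ k else 0, fun j _ => ?_, ?_⟩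
  · dsimp only
    split_ifs with hj
    · subst hj; exact neg_mem h
    · exact zero_mem _
  · simp [ite_mul, Finset.sum_ite_eq', hk]

theorem MvPolynomial.monomial_mem_span_X_pow_iff {σ R : Type*} [CommSemiring R] [Nontrivial R]
    (a : σ → ℕ) (m : σ →₀ ℕ) :
    monomial m (1 : R) ∈ Ideal.span (Set.range fun i => X i ^ a i) ↔ ∃ i, a i ≤ m i := by
  classical
  have : (Set.range fun i => (X i ^ a i : MvPolynomial σ R)) =
      (fun t => monomial t 1) '' Set.range fun i => Finsupp.single i (a i) := by
    rw [← Set.range_comp]; simp [Function.comp_def, X_pow_eq_monomial]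
  rw [this, mem_ideal_span_monomial_image, support_monomial, if_neg one_ne_zero]
  simp [Finsupp.single_le_iff]

section Chow

variable (R : Type*) [CommRing R]

noncomputable def chowIdeal : Ideal (MvPolynomial (Fin 3) R) :=
  Ideal.span {X 0 ^ 3 + X 1 ^ 5, X 0 ^ 2 * X 2, X 0 * X 2 ^ 2, X 2 ^ 3,
    X 1 ^ 4 * X 2, X 1 ^ 3 * X 2 ^ 2, X 1 ^ 2 * X 2 ^ 3, X 1 * X 2 ^ 4, X 2 ^ 5}

theorem sq_mem_chowIdeal_sq :
    ((X 1 ^ 2 * X 2 ^ 2) ^ 2 : MvPolynomial (Fin 3) R) ∈ chowIdeal R ^ 2 := by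
  rw [show ((X 1 ^ 2 * X 2 ^ 2) ^ 2 : MvPolynomial (Fin 3) R) = X 2 ^ 3 * (X 1 ^ 4 * X 2) by ring,
    pow_two]
  exact Ideal.mul_mem_mul (Ideal.subset_span (by simp)) (Ideal.subset_span (by simp))

theorem chowIdeal_le_span_X_pow :
    chowIdeal R ≤ Ideal.span (Set.range fun i => X i ^ ![1, 3, 3] i) := by
  set J : Ideal (MvPolynomial (Fin 3) R) := Ideal.span (Set.range fun i => X i ^ ![1, 3, 3] i)
  have hpow : ∀ i n, ![1, 3, 3] i ≤ n → X i ^ n ∈ J := fun i n hn =>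
    J.mem_of_dvd (pow_dvd_pow _ hn) (Ideal.subset_span ⟨i, rfl⟩)
  rw [chowIdeal, Ideal.span_le]
  simp only [Set.insert_subset_iff, Set.singleton_subset_iff, SetLike.mem_coe]
  refine ⟨J.add_mem (hpow 0 3 ?_) (hpow 1 5 ?_), J.mul_mem_right _ (hpow 0 2 ?_),
    J.mul_mem_right _ (pow_one (X 0 : MvPolynomial (Fin 3) R) ▸ hpow 0 1 ?_), hpow 2 3 ?_,
    J.mul_mem_right _ (hpow 1 4 ?_), J.mul_mem_right _ (hpow 1 3 ?_),
    J.mul_mem_left _ (hpow 2 3 ?_), J.mul_mem_left _ (hpow 2 4 ?_), hpow 2 5 ?_⟩ <;> decide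

theorem X_one_sq_mul_X_two_sq_notMem_chowIdeal [Nontrivial R] :
    (X 1 ^ 2 * X 2 ^ 2 : MvPolynomial (Fin 3) R) ∉ chowIdeal R := by
  intro h
  have := chowIdeal_le_span_X_pow R h
  rw [X_pow_eq_monomial, X_pow_eq_monomial, monomial_mul, one_mul,
    monomial_mem_span_X_pow_iff] at this
  obtain ⟨i, hi⟩ := this
  fin_cases i <;> simp at hi

end Chow

/-- For the ideal
`I = (x₁³+x₂⁵, x₁²x₃, x₁x₃², x₃³, x₂⁴x₃, x₂³x₃², x₂²x₃³, x₂x₃⁴, x₃⁵)` of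
`K[x₁,x₂,x₃]` (here `x₁ = X 0`, `x₂ = X 1`, `x₃ = X 2`), the element `x₂²x₃²`
is integral over `I` but does not lie in `I`; in particular `I` is not
integrally closed. -/
theorem chow_ideal_not_integrally_closed {K : Type*} [Field K] :
    IsIntegralOverIdeal
        (Ideal.span {(X 0 ^ 3 + X 1 ^ 5 : MvPolynomial (Fin 3) K),
          X 0 ^ 2 * X 2, X 0 * X 2 ^ 2, X 2 ^ 3,
          X 1 ^ 4 * X 2, X 1 ^ 3 * X 2 ^ 2, X 1 ^ 2 * X 2 ^ 3, X 1 * X 2 ^ 4, X 2 ^ 5})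
        (X 1 ^ 2 * X 2 ^ 2) ∧
      (X 1 ^ 2 * X 2 ^ 2 : MvPolynomial (Fin 3) K) ∉
        Ideal.span {(X 0 ^ 3 + X 1 ^ 5 : MvPolynomial (Fin 3) K),
          X 0 ^ 2 * X 2, X 0 * X 2 ^ 2, X 2 ^ 3,
          X 1 ^ 4 * X 2, X 1 ^ 3 * X 2 ^ 2, X 1 ^ 2 * X 2 ^ 3, X 1 * X 2 ^ 4, X 2 ^ 5} ∧
      ¬ (∀ r : MvPolynomial (Fin 3) K,
          IsIntegralOverIdeal
            (Ideal.span {(X 0 ^ 3 + X 1 ^ 5 : MvPolynomial (Fin 3) K),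
              X 0 ^ 2 * X 2, X 0 * X 2 ^ 2, X 2 ^ 3,
              X 1 ^ 4 * X 2, X 1 ^ 3 * X 2 ^ 2, X 1 ^ 2 * X 2 ^ 3, X 1 * X 2 ^ 4, X 2 ^ 5}) r →
          r ∈ Ideal.span {(X 0 ^ 3 + X 1 ^ 5 : MvPolynomial (Fin 3) K),
              X 0 ^ 2 * X 2, X 0 * X 2 ^ 2, X 2 ^ 3,
              X 1 ^ 4 * X 2, X 1 ^ 3 * X 2 ^ 2, X 1 ^ 2 * X 2 ^ 3, X 1 * X 2 ^ 4, X 2 ^ 5}) := by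
  have hint : IsIntegralOverIdeal (chowIdeal K) (X 1 ^ 2 * X 2 ^ 2) :=
    isIntegralOverIdeal_of_pow_mem_pow one_le_two (sq_mem_chowIdeal_sq K)
  have hnotMem := X_one_sq_mul_X_two_sq_notMem_chowIdeal K
  exact ⟨hint, hnotMem, fun h => hnotMem (h _ hint)⟩
end

section
/- Let K be a field, n ≥ 3 an odd integer, and in K[x,y,z,s] let I_n be the ideal generated by x² − y^n, z² − y s², z^n − x s^n, x z − y s^{(n+1)/2}, x s − y^{(n−1)/2} z; let J_n = (x² − y^n, z, s) and let 𝔪 = (x, y, z, s). Then J_n² ⊆ I_n + (s) and 𝔪^{(n−1)/2}·J_n ⊆ I_n + (s). -/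
/-!
Write `x, y, z, s` for `X 0, X 1, X 2, X 3` and `m = (n - 1) / 2`. Modulo `Iₙ + (s)` the
generators of `Iₙ` say that `s`, `z²`, `xz` and `y^m z` vanish, and then so does
`(x² - yⁿ) z = x · xz - y^(n-m) · y^m z`. This kills every product of two generators of `Jₙ`.
For `𝔪^m Jₙ` only `𝔪^m z` needs care: a degree-`m` monomial in `x, y, z, s` times `z` is
killed by `xz`, `z²` or `s` unless it is `y^m z`.
-/

namespace Ideal

variable {R : Type*} [CommRing R]

theorem mul_sup_le_sup_mul (I T K : Ideal R) : I * (T ⊔ K) ≤ T ⊔ I * K := by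
  rw [mul_sup]; exact sup_le_sup_right mul_le_right _

theorem pow_mul_span_singleton_le {I T : Ideal R} {y z : R}
    (h : I * span {z} ≤ T ⊔ span {y * z}) (j : ℕ) :
    I ^ j * span {z} ≤ T ⊔ span {y ^ j * z} := by
  induction j with
  | zero => simp
  | succ j ih =>
    calc I ^ (j + 1) * span {z} = I ^ j * (I * span {z}) := by rw [pow_succ, mul_assoc]
      _ ≤ T ⊔ I ^ j * span {y * z} := (mul_mono_right h).trans (mul_sup_le_sup_mul _ _ _)
      _ = T ⊔ span {y} * (I ^ j * span {z}) := by
          rw [← span_singleton_mul_span_singleton, mul_left_comm]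
      _ ≤ T ⊔ span {y} * (T ⊔ span {y ^ j * z}) := sup_le_sup_left (mul_mono_right ih) _
      _ ≤ T ⊔ span {y ^ (j + 1) * z} := by
          refine sup_le le_sup_left ((mul_sup_le_sup_mul _ _ _).trans (le_of_eq ?_))
          rw [span_singleton_mul_span_singleton, ← mul_assoc, ← pow_succ']

theorem span_mul_span_le_iff {S S' : Set R} {T : Ideal R} :
    span S * span S' ≤ T ↔ ∀ a ∈ S, ∀ b ∈ S', a * b ∈ T := by
  rw [span_mul_span, span_le, Set.mul_subset_iff]; rfl

theorem span_triple_sq_le {T : Ideal R} {a b c : R} (ha : a ∈ T) (hc : c ∈ T)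
    (hab : a * b ∈ T) (hbb : b * b ∈ T) : span {a, b, c} ^ 2 ≤ T := by
  rw [sq, span_mul_span_le_iff]
  simp only [Set.mem_insert_iff, Set.mem_singleton_iff, forall_eq_or_imp, forall_eq]
  exact ⟨⟨T.mul_mem_right _ ha, hab, T.mul_mem_right _ ha⟩,
    ⟨mul_comm a b ▸ hab, hbb, T.mul_mem_left _ hc⟩, T.mul_mem_right _ hc,
    T.mul_mem_right _ hc, T.mul_mem_right _ hc⟩

theorem span_quad_mul_span_singleton_le {T : Ideal R} {x y z s : R} (hxz : x * z ∈ T)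
    (hzz : z * z ∈ T) (hs : s ∈ T) : span {x, y, z, s} * span {z} ≤ T ⊔ span {y * z} := by
  rw [span_mul_span_le_iff]
  simp only [Set.mem_insert_iff, Set.mem_singleton_iff, forall_eq_or_imp, forall_eq]
  exact ⟨mem_sup_left hxz, mem_sup_right (mem_span_singleton_self _), mem_sup_left hzz,
    mem_sup_left (T.mul_mem_right _ hs)⟩

theorem span_quad_pow_mul_span_triple_le {T : Ideal R} {x y z s f : R} {m : ℕ}
    (hf : f ∈ T) (hs : s ∈ T) (hxz : x * z ∈ T) (hzz : z * z ∈ T) (hyz : y ^ m * z ∈ T) :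
    span {x, y, z, s} ^ m * span {f, z, s} ≤ T := by
  have hz : span {x, y, z, s} ^ m * span {z} ≤ T :=
    (pow_mul_span_singleton_le (span_quad_mul_span_singleton_le hxz hzz hs) m).trans
      (sup_le le_rfl ((span_singleton_le_iff_mem T).2 hyz))
  rw [span_insert f, span_insert z, mul_sup, mul_sup]
  exact sup_le (mul_le_right.trans ((span_singleton_le_iff_mem T).2 hf))
    (sup_le hz (mul_le_right.trans ((span_singleton_le_iff_mem T).2 hs)))

theorem mem_sup_span_singleton_of_sub_mem {I : Ideal R} {a b s : R} (h : a - b ∈ I)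
    (hb : s ∣ b) : a ∈ I ⊔ span {s} := by
  rw [← sub_add_cancel a b]
  exact add_mem (mem_sup_left h) (mem_sup_right (mem_span_singleton.2 hb))

theorem sq_sub_pow_mul_mem {T : Ideal R} {x y z : R} {m n : ℕ} (hmn : m ≤ n)
    (hxz : x * z ∈ T) (hyz : y ^ m * z ∈ T) : (x ^ 2 - y ^ n) * z ∈ T := by
  have h : (x ^ 2 - y ^ n) * z = x * (x * z) - y ^ (n - m) * (y ^ m * z) := by
    rw [← pow_sub_mul_pow y hmn]; ring
  exact h ▸ sub_mem (T.mul_mem_left _ hxz) (T.mul_mem_left _ hyz)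

end Ideal

open MvPolynomial

theorem Jn_sq_and_m_Jn_subset_general {K : Type*} [Field K] (n : ℕ) (hn3 : 3 ≤ n) :
    (Ideal.span {(X 0 ^ 2 - X 1 ^ n : MvPolynomial (Fin 4) K), X 2, X 3}) ^ 2 ≤
      (Ideal.span {(X 0 ^ 2 - X 1 ^ n : MvPolynomial (Fin 4) K),
          X 2 ^ 2 - X 1 * X 3 ^ 2, X 2 ^ n - X 0 * X 3 ^ n,
          X 0 * X 2 - X 1 * X 3 ^ ((n + 1) / 2),
          X 0 * X 3 - X 1 ^ ((n - 1) / 2) * X 2}) +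
        Ideal.span {(X 3 : MvPolynomial (Fin 4) K)} ∧
    (Ideal.span {(X 0 : MvPolynomial (Fin 4) K), X 1, X 2, X 3}) ^ ((n - 1) / 2) *
        Ideal.span {(X 0 ^ 2 - X 1 ^ n : MvPolynomial (Fin 4) K), X 2, X 3} ≤
      (Ideal.span {(X 0 ^ 2 - X 1 ^ n : MvPolynomial (Fin 4) K),
          X 2 ^ 2 - X 1 * X 3 ^ 2, X 2 ^ n - X 0 * X 3 ^ n,
          X 0 * X 2 - X 1 * X 3 ^ ((n + 1) / 2),
          X 0 * X 3 - X 1 ^ ((n - 1) / 2) * X 2}) +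
        Ideal.span {(X 3 : MvPolynomial (Fin 4) K)} := by
  set I : Ideal (MvPolynomial (Fin 4) K) := Ideal.span {X 0 ^ 2 - X 1 ^ n,
    X 2 ^ 2 - X 1 * X 3 ^ 2, X 2 ^ n - X 0 * X 3 ^ n, X 0 * X 2 - X 1 * X 3 ^ ((n + 1) / 2),
    X 0 * X 3 - X 1 ^ ((n - 1) / 2) * X 2}
  rw [Submodule.add_eq_sup]
  have hf : X 0 ^ 2 - X 1 ^ n ∈ I ⊔ Ideal.span {X 3} :=
    Ideal.mem_sup_left (Ideal.subset_span (by simp))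
  have hs : X 3 ∈ I ⊔ Ideal.span {X 3} := Ideal.mem_sup_right (Ideal.mem_span_singleton_self _)
  have hzz : X 2 * X 2 ∈ I ⊔ Ideal.span {X 3} :=
    Ideal.mem_sup_span_singleton_of_sub_mem (b := X 1 * X 3 ^ 2)
      (Ideal.subset_span (by simp [sq])) (dvd_mul_of_dvd_right (dvd_pow_self _ two_ne_zero) _)
  have hxz : X 0 * X 2 ∈ I ⊔ Ideal.span {X 3} :=
    Ideal.mem_sup_span_singleton_of_sub_mem (b := X 1 * X 3 ^ ((n + 1) / 2))
      (Ideal.subset_span (by simp))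
      (dvd_mul_of_dvd_right (dvd_pow_self _ (by omega)) _)
  have hyz : X 1 ^ ((n - 1) / 2) * X 2 ∈ I ⊔ Ideal.span {X 3} :=
    Ideal.mem_sup_span_singleton_of_sub_mem (b := X 0 * X 3)
      (by rw [← neg_sub]; exact neg_mem (Ideal.subset_span (by simp))) (dvd_mul_left _ _)
  exact ⟨Ideal.span_triple_sq_le hf hs (Ideal.sq_sub_pow_mul_mem (by omega) hxz hyz) hzz,
    Ideal.span_quad_pow_mul_span_triple_le hf hs hxz hzz hyz⟩

/-- In `K[x,y,z,s]` (with `x = X 0`, `y = X 1`, `z = X 2`, `s = X 3`), for odd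
`n ≥ 3`, with `Iₙ = (x²−yⁿ, z²−ys², zⁿ−xsⁿ, xz−ys^((n+1)/2), xs−y^((n−1)/2)z)`,
`Jₙ = (x²−yⁿ, z, s)` and `𝔪 = (x,y,z,s)`, one has `Jₙ² ⊆ Iₙ + (s)` and
`𝔪^((n−1)/2)·Jₙ ⊆ Iₙ + (s)`. -/
theorem Jn_sq_and_m_Jn_subset {K : Type*} [Field K] (n : ℕ) (hn3 : 3 ≤ n)
    (hodd : Odd n) :
    (Ideal.span {(X 0 ^ 2 - X 1 ^ n : MvPolynomial (Fin 4) K), X 2, X 3}) ^ 2 ≤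
      (Ideal.span {(X 0 ^ 2 - X 1 ^ n : MvPolynomial (Fin 4) K),
          X 2 ^ 2 - X 1 * X 3 ^ 2, X 2 ^ n - X 0 * X 3 ^ n,
          X 0 * X 2 - X 1 * X 3 ^ ((n + 1) / 2),
          X 0 * X 3 - X 1 ^ ((n - 1) / 2) * X 2}) +
        Ideal.span {(X 3 : MvPolynomial (Fin 4) K)} ∧
    (Ideal.span {(X 0 : MvPolynomial (Fin 4) K), X 1, X 2, X 3}) ^ ((n - 1) / 2) *
        Ideal.span {(X 0 ^ 2 - X 1 ^ n : MvPolynomial (Fin 4) K), X 2, X 3} ≤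
      (Ideal.span {(X 0 ^ 2 - X 1 ^ n : MvPolynomial (Fin 4) K),
          X 2 ^ 2 - X 1 * X 3 ^ 2, X 2 ^ n - X 0 * X 3 ^ n,
          X 0 * X 2 - X 1 * X 3 ^ ((n + 1) / 2),
          X 0 * X 3 - X 1 ^ ((n - 1) / 2) * X 2}) +
        Ideal.span {(X 3 : MvPolynomial (Fin 4) K)} :=
  Jn_sq_and_m_Jn_subset_general n hn3
end

section
/- Let K be a field, n ≥ 3 an odd integer, and in K[x,y,z,s] let I_n be the ideal generated by x² − y^n, z² − y s², z^n − x s^n, x z − y s^{(n+1)/2}, x s − y^{(n−1)/2} z, and let J_n = (x² − y^n, z, s). Then I_n + (s) ⊆ J_n and the quotient J_n / (I_n + (s)) is a K-vector space of dimension (n−1)/2, with basis given by the images of z, yz, …, y^{(n−3)/2} z. -/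
/-! Write `𝔞 = Iₙ + (s)`. Modulo `𝔞`, `s = 0` forces `xz = z² = y^((n-1)/2) z = 0`, so the
`K`-span of the `y^k z` with `k < (n-1)/2` is stable under multiplication by every variable; as it
contains `z`, it is the image of `Jₙ`, whose other two generators vanish modulo `𝔞`. For
independence, `𝔞` lies in the monomial ideal `(x, z², s, y^((n-1)/2))`, and no `y^k z` with
`k < (n-1)/2` is divisible by one of its generators. -/

open MvPolynomial

theorem MvPolynomial.linearIndependent_mk_monomial {σ R ι : Type*} [CommRing R]
    {I : Ideal (MvPolynomial σ R)} {S : Set (σ →₀ ℕ)}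
    (hI : I ≤ Ideal.span ((fun s => monomial s (1 : R)) '' S))
    {e : ι → σ →₀ ℕ} (he : Function.Injective e) (hS : ∀ i, ∀ s ∈ S, ¬ s ≤ e i) :
    LinearIndependent R fun i => Ideal.Quotient.mk I (monomial (e i) 1) := by
  refine ((basisMonomials σ R).linearIndependent.comp e he).map
    (f := (Ideal.Quotient.mkₐ R I).toLinearMap) ?_
  rw [Submodule.disjoint_def]
  intro p hp hpI
  have hsupp : (p.support : Set (σ →₀ ℕ)) ⊆ Set.range e := by
    rwa [← mem_restrictSupport_iff, restrictSupport_eq_span, ← Set.range_comp]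
  rw [LinearMap.mem_ker, AlgHom.toLinearMap_apply, Ideal.Quotient.mkₐ_eq_mk,
    Ideal.Quotient.eq_zero_iff_mem] at hpI
  rw [← support_eq_empty, Finset.eq_empty_iff_forall_notMem]
  intro m hm
  obtain ⟨i, rfl⟩ := hsupp hm
  obtain ⟨s, hs, hle⟩ := mem_ideal_span_monomial_image.1 (hI hpI) _ hm
  exact hS i s hs hle

theorem MvPolynomial.algHom_mul_mem_of_forall_X_mul_mem {σ R B : Type*} [CommSemiring R]
    [Semiring B] [Algebra R B] (f : MvPolynomial σ R →ₐ[R] B) {N : Submodule R B}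
    (hN : ∀ i, ∀ b ∈ N, f (X i) * b ∈ N) (p : MvPolynomial σ R) {b : B} (hb : b ∈ N) :
    f p * b ∈ N := by
  induction p using MvPolynomial.induction_on generalizing b with
  | C a => rw [← algebraMap_eq, AlgHom.commutes, ← Algebra.smul_def]; exact N.smul_mem a hb
  | add p q hp hq => rw [map_add, add_mul]; exact add_mem (hp hb) (hq hb)
  | mul_X p i hp => rw [map_mul, mul_assoc]; exact hp (hN i b hb)

namespace JnQuotient

variable (K : Type*) [Field K] (n : ℕ)

noncomputable def idealI : Ideal (MvPolynomial (Fin 4) K) :=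
  Ideal.span {X 0 ^ 2 - X 1 ^ n, X 2 ^ 2 - X 1 * X 3 ^ 2,
    X 2 ^ n - X 0 * X 3 ^ n, X 0 * X 2 - X 1 * X 3 ^ ((n + 1) / 2),
    X 0 * X 3 - X 1 ^ ((n - 1) / 2) * X 2}

noncomputable def idealJ : Ideal (MvPolynomial (Fin 4) K) :=
  Ideal.span {X 0 ^ 2 - X 1 ^ n, X 2, X 3}

local notation "π" => Ideal.Quotient.mk (idealI K n + Ideal.span {X 3})

variable {K n}

theorem idealI_add_span_X3_le_idealJ (hn : 1 ≤ n) :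
    idealI K n + Ideal.span {X 3} ≤ idealJ K n := by
  have hz : X 2 ∈ idealJ K n := Ideal.subset_span (by simp)
  have hs : X 3 ∈ idealJ K n := Ideal.subset_span (by simp)
  rw [Submodule.add_eq_sup, sup_le_iff, idealI, Ideal.span_le, Ideal.span_le]
  simp only [Set.insert_subset_iff, Set.singleton_subset_iff, SetLike.mem_coe]
  refine ⟨⟨Ideal.subset_span (by simp), ?_, ?_, ?_, ?_⟩, hs⟩
  · exact sub_mem (Ideal.pow_mem_of_mem _ hz 2 two_pos)
      (Ideal.mul_mem_left _ _ (Ideal.pow_mem_of_mem _ hs 2 two_pos))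
  · exact sub_mem (Ideal.pow_mem_of_mem _ hz n hn)
      (Ideal.mul_mem_left _ _ (Ideal.pow_mem_of_mem _ hs n hn))
  · exact sub_mem (Ideal.mul_mem_left _ _ hz)
      (Ideal.mul_mem_left _ _ (Ideal.pow_mem_of_mem _ hs _ (by omega)))
  · exact sub_mem (Ideal.mul_mem_left _ _ hs) (Ideal.mul_mem_left _ _ hz)

theorem mk_X3 : π (X 3) = 0 :=
  Ideal.Quotient.eq_zero_iff_mem.2 (Ideal.mem_sup_right (Ideal.subset_span rfl))

theorem mk_eq_zero_of_mem_idealI {p : MvPolynomial (Fin 4) K} (hp : p ∈ idealI K n) : π p = 0 :=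
  Ideal.Quotient.eq_zero_iff_mem.2 (Ideal.mem_sup_left hp)

theorem mk_X0_sq_sub_X1_pow : π (X 0 ^ 2 - X 1 ^ n) = 0 :=
  mk_eq_zero_of_mem_idealI (Ideal.subset_span (by simp))

theorem mk_X0_mul_X2 (hn : 1 ≤ n) : π (X 0 * X 2) = 0 := by
  have h := mk_eq_zero_of_mem_idealI (K := K)
    (Ideal.subset_span (by simp) : X 0 * X 2 - X 1 * X 3 ^ ((n + 1) / 2) ∈ idealI K n)
  simp only [map_sub, map_mul, map_pow, mk_X3] at h ⊢
  rwa [zero_pow (by omega), mul_zero, sub_zero] at h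

theorem mk_X2_sq : π (X 2 ^ 2) = 0 := by
  have h := mk_eq_zero_of_mem_idealI (K := K) (n := n)
    (Ideal.subset_span (by simp) : X 2 ^ 2 - X 1 * X 3 ^ 2 ∈ idealI K n)
  simp only [map_sub, map_mul, map_pow, mk_X3] at h ⊢
  rwa [zero_pow two_ne_zero, mul_zero, sub_zero] at h

theorem mk_X1_pow_mul_X2 : π (X 1 ^ ((n - 1) / 2) * X 2) = 0 := by
  have h := mk_eq_zero_of_mem_idealI (K := K)
    (Ideal.subset_span (by simp) : X 0 * X 3 - X 1 ^ ((n - 1) / 2) * X 2 ∈ idealI K n)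
  simp only [map_sub, map_mul, map_pow, mk_X3] at h ⊢
  rwa [mul_zero, zero_sub, neg_eq_zero] at h

local notation "𝒵" => Submodule.span K
  (Set.range fun k : Fin ((n - 1) / 2) => π (X 1 ^ (k : ℕ) * X 2))

theorem X_mul_mem_span_range (hn : 1 ≤ n) (i : Fin 4) (k : Fin ((n - 1) / 2)) :
    π (X i) * π (X 1 ^ (k : ℕ) * X 2) ∈ 𝒵 := by
  rw [← map_mul]
  match i with
  | 0 =>
    have h : (X 0 * (X 1 ^ (k : ℕ) * X 2) : MvPolynomial (Fin 4) K) =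
        X 1 ^ (k : ℕ) * (X 0 * X 2) := by ring
    rw [h, map_mul, mk_X0_mul_X2 hn, mul_zero]
    exact zero_mem _
  | 1 =>
    have h : (X 1 * (X 1 ^ (k : ℕ) * X 2) : MvPolynomial (Fin 4) K) =
        X 1 ^ ((k : ℕ) + 1) * X 2 := by ring
    rw [h]
    by_cases hk : (k : ℕ) + 1 < (n - 1) / 2
    · exact Submodule.subset_span ⟨⟨k + 1, hk⟩, rfl⟩
    · rw [show (k : ℕ) + 1 = (n - 1) / 2 by omega, mk_X1_pow_mul_X2]
      exact zero_mem _
  | 2 =>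
    have h : (X 2 * (X 1 ^ (k : ℕ) * X 2) : MvPolynomial (Fin 4) K) =
        X 1 ^ (k : ℕ) * X 2 ^ 2 := by ring
    rw [h, map_mul, mk_X2_sq, mul_zero]
    exact zero_mem _
  | 3 =>
    rw [mul_comm, map_mul, mk_X3, mul_zero]
    exact zero_mem _

theorem idealI_add_span_X3_le_span_monomial (hn : 2 ≤ n) :
    idealI K n + Ideal.span {X 3} ≤ Ideal.span ((fun s => monomial s (1 : K)) ''
      {Finsupp.single 0 1, Finsupp.single 2 2, Finsupp.single 3 1,
        Finsupp.single 1 ((n - 1) / 2)}) := by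
  simp only [Set.image_insert_eq, Set.image_singleton, ← X_pow_eq_monomial, pow_one]
  set 𝔪 : Ideal (MvPolynomial (Fin 4) K) := Ideal.span {X 0, X 2 ^ 2, X 3, X 1 ^ ((n - 1) / 2)}
  have hx : X 0 ∈ 𝔪 := Ideal.subset_span (by simp)
  have hz : X 2 ^ 2 ∈ 𝔪 := Ideal.subset_span (by simp)
  have hs : X 3 ∈ 𝔪 := Ideal.subset_span (by simp)
  have hy : X 1 ^ ((n - 1) / 2) ∈ 𝔪 := Ideal.subset_span (by simp)
  rw [Submodule.add_eq_sup, sup_le_iff, idealI, Ideal.span_le, Ideal.span_le]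
  simp only [Set.insert_subset_iff, Set.singleton_subset_iff, SetLike.mem_coe]
  refine ⟨⟨?_, ?_, ?_, ?_, ?_⟩, hs⟩
  · exact sub_mem (Ideal.pow_mem_of_mem _ hx 2 two_pos) (Ideal.pow_mem_of_pow_mem _ hy (by omega))
  · exact sub_mem hz (Ideal.mul_mem_left _ _ (Ideal.pow_mem_of_mem _ hs 2 two_pos))
  · exact sub_mem (Ideal.pow_mem_of_pow_mem _ hz hn)
      (Ideal.mul_mem_left _ _ (Ideal.pow_mem_of_mem _ hs n (by omega)))
  · exact sub_mem (Ideal.mul_mem_right _ _ hx)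
      (Ideal.mul_mem_left _ _ (Ideal.pow_mem_of_mem _ hs _ (by omega)))
  · exact sub_mem (Ideal.mul_mem_right _ _ hx) (Ideal.mul_mem_right _ _ hy)

theorem linearIndependent_mk_X1_pow_mul_X2 (hn : 2 ≤ n) :
    LinearIndependent K fun k : Fin ((n - 1) / 2) => π (X 1 ^ (k : ℕ) * X 2) := by
  have hmono : ∀ k : ℕ, (X 1 ^ k * X 2 : MvPolynomial (Fin 4) K) =
      monomial (Finsupp.single 1 k + Finsupp.single 2 1) 1 := fun k => by
    rw [X_pow_eq_monomial, X, monomial_mul, one_mul]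
  simp only [hmono]
  refine linearIndependent_mk_monomial (idealI_add_span_X3_le_span_monomial hn)
    (fun k l h => Fin.ext (by simpa using DFunLike.congr_fun h 1)) ?_
  intro k s hs hle
  simp only [Set.mem_insert_iff, Set.mem_singleton_iff] at hs
  rcases hs with rfl | rfl | rfl | rfl
  · simpa using hle 0
  · simpa using hle 2
  · simpa using hle 3
  · exact absurd (hle 1) (by simp)

theorem span_range_eq_map_idealJ (hn : 3 ≤ n) :
    𝒵 = ((idealJ K n).map π).restrictScalars K := by
  apply le_antisymm
  · rw [Submodule.span_le]
    rintro _ ⟨k, rfl⟩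
    exact Ideal.mem_map_of_mem _ (Ideal.mul_mem_left _ _ (Ideal.subset_span (by simp)))
  · intro q hq
    obtain ⟨p, hp, rfl⟩ := (Ideal.mem_map_iff_of_surjective _ Ideal.Quotient.mk_surjective).1 hq
    obtain ⟨a, r, hr, rfl⟩ := Ideal.mem_span_insert.1 hp
    obtain ⟨b, c, rfl⟩ := Ideal.mem_span_pair.1 hr
    have hX_mul : ∀ i, ∀ w ∈ 𝒵, Ideal.Quotient.mkₐ K _ (X i) * w ∈ 𝒵 :=
      fun i w hw =>
        (Submodule.span_le (p := Submodule.comap (LinearMap.mulLeft K (π (X i))) 𝒵)).2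
          (Set.range_subset_iff.2 (X_mul_mem_span_range (by omega) i)) hw
    have hz : π (X 2) ∈ 𝒵 :=
      Submodule.subset_span ⟨(⟨0, by omega⟩ : Fin ((n - 1) / 2)), by simp⟩
    simp only [map_add, map_mul, mk_X0_sq_sub_X1_pow, mk_X3, mul_zero, zero_add, add_zero]
    exact algHom_mul_mem_of_forall_X_mul_mem _ hX_mul b hz

end JnQuotient

open JnQuotient in
theorem Jn_quotient_basis_general {K : Type*} [Field K] (n : ℕ) (hn3 : 3 ≤ n)
    (Iₙ : Ideal (MvPolynomial (Fin 4) K))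
    (hIₙ : Iₙ = Ideal.span {X 0 ^ 2 - X 1 ^ n, X 2 ^ 2 - X 1 * X 3 ^ 2,
        X 2 ^ n - X 0 * X 3 ^ n, X 0 * X 2 - X 1 * X 3 ^ ((n + 1) / 2),
        X 0 * X 3 - X 1 ^ ((n - 1) / 2) * X 2})
    (Jₙ : Ideal (MvPolynomial (Fin 4) K))
    (hJₙ : Jₙ = Ideal.span {X 0 ^ 2 - X 1 ^ n, X 2, X 3}) :
    Iₙ + Ideal.span {X 3} ≤ Jₙ ∧
    LinearIndependent K (fun k : Fin ((n - 1) / 2) =>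
      Ideal.Quotient.mk (Iₙ + Ideal.span {X 3}) (X 1 ^ (k : ℕ) * X 2)) ∧
    Submodule.span K (Set.range fun k : Fin ((n - 1) / 2) =>
        Ideal.Quotient.mk (Iₙ + Ideal.span {X 3}) (X 1 ^ (k : ℕ) * X 2)) =
      Submodule.restrictScalars K
        (Jₙ.map (Ideal.Quotient.mk (Iₙ + Ideal.span {X 3}))) := by
  subst hIₙ hJₙ
  exact ⟨idealI_add_span_X3_le_idealJ (by omega), linearIndependent_mk_X1_pow_mul_X2 (by omega),
    span_range_eq_map_idealJ hn3⟩

set_option synthInstance.maxHeartbeats 1000000 in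
/-- In `K[x,y,z,s]` (with `x = X 0`, `y = X 1`, `z = X 2`, `s = X 3`), for odd
`n ≥ 3`, with `Iₙ = (x²−yⁿ, z²−ys², zⁿ−xsⁿ, xz−ys^((n+1)/2), xs−y^((n−1)/2)z)`
and `Jₙ = (x²−yⁿ, z, s)`: one has `Iₙ + (s) ⊆ Jₙ`, and the quotient
`Jₙ/(Iₙ+(s))` is a `K`-vector space of dimension `(n−1)/2` with basis the
images of `z, yz, …, y^((n−3)/2)z`. -/
theorem Jn_quotient_basis {K : Type*} [Field K] (n : ℕ) (hn3 : 3 ≤ n)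
    (hodd : Odd n)
    (Iₙ : Ideal (MvPolynomial (Fin 4) K))
    (hIₙ : Iₙ = Ideal.span {X 0 ^ 2 - X 1 ^ n, X 2 ^ 2 - X 1 * X 3 ^ 2,
        X 2 ^ n - X 0 * X 3 ^ n, X 0 * X 2 - X 1 * X 3 ^ ((n + 1) / 2),
        X 0 * X 3 - X 1 ^ ((n - 1) / 2) * X 2})
    (Jₙ : Ideal (MvPolynomial (Fin 4) K))
    (hJₙ : Jₙ = Ideal.span {X 0 ^ 2 - X 1 ^ n, X 2, X 3}) :
    Iₙ + Ideal.span {X 3} ≤ Jₙ ∧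
    LinearIndependent K (fun k : Fin ((n - 1) / 2) =>
      Ideal.Quotient.mk (Iₙ + Ideal.span {X 3}) (X 1 ^ (k : ℕ) * X 2)) ∧
    Submodule.span K (Set.range fun k : Fin ((n - 1) / 2) =>
        Ideal.Quotient.mk (Iₙ + Ideal.span {X 3}) (X 1 ^ (k : ℕ) * X 2)) =
      Submodule.restrictScalars K
        (Jₙ.map (Ideal.Quotient.mk (Iₙ + Ideal.span {X 3}))) :=
  Jn_quotient_basis_general n hn3 Iₙ hIₙ Jₙ hJₙ
end
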